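/- Define the binary Shannon entropy H₂(x) = −x·log₂x − (1−x)·log₂(1−x), with the convention 0·log₂0 = 0. For all p, q ∈ (0,1), ((1-p)/(1-pq))·log₂((1-p)/(2(1-pq))) + (p(1-q)/(1-pq))·log₂(p(1-q)/(2(1-pq))) = (H₂(pq) − H₂(p) − p·H₂(q) − (1−pq))/(1−pq). -/

import Mathlib

/-!
With `r = 1 - pq`, the weights `x = (1 - p)/r` and `1 - x = p(1 - q)/r` form a probability
vector, so the left-hand side is `-H₂(x) - 1`. The grouping (chain) rule for the entropy of
the three outcomes `pq, p(1 - q), 1 - p`, split first by `p` and then by `pq`, reads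
`H₂(p) + p·H₂(q) = H₂(pq) + r·H₂(x)`, which turns the right-hand side into `-H₂(x) - 1` too.
-/

/-- The binary Shannon entropy `H₂(x) = −x·log₂x − (1−x)·log₂(1−x)`,
with the convention `0·log₂0 = 0` (automatic since `Real.logb 2 0 = 0`). -/
noncomputable def H2 (x : ℝ) : ℝ := -(x * Real.logb 2 x) - (1 - x) * Real.logb 2 (1 - x)

open Real

lemma H2_eq_binEntropy_div_log_two (x : ℝ) : H2 x = binEntropy x / log 2 := by
  simp only [H2, binEntropy, logb, log_inv]
  ring

lemma negMulLog_inv (x : ℝ) : negMulLog x⁻¹ = x⁻¹ * log x := by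
  simp [negMulLog, log_inv]

lemma binEntropy_add_mul_binEntropy {p q : ℝ} (hpq : p * q ≠ 1) :
    binEntropy p + p * binEntropy q =
      binEntropy (p * q) + (1 - p * q) * binEntropy ((1 - p) / (1 - p * q)) := by
  have hr : 1 - p * q ≠ 0 := sub_ne_zero.mpr hpq.symm
  have hcompl : 1 - (1 - p) / (1 - p * q) = p * (1 - q) / (1 - p * q) := by
    field_simp
    ring
  simp only [binEntropy_eq_negMulLog_add_negMulLog_one_sub]
  rw [hcompl]
  simp only [div_eq_mul_inv, negMulLog_mul, negMulLog_inv]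
  simp only [negMulLog]
  field_simp
  ring

lemma H2_add_mul_H2 {p q : ℝ} (hpq : p * q ≠ 1) :
    H2 p + p * H2 q = H2 (p * q) + (1 - p * q) * H2 ((1 - p) / (1 - p * q)) := by
  simp only [H2_eq_binEntropy_div_log_two]
  linear_combination binEntropy_add_mul_binEntropy hpq / log 2

lemma mul_logb_div_two (x : ℝ) : x * logb 2 (x / 2) = x * logb 2 x - x := by
  rcases eq_or_ne x 0 with rfl | hx
  · simp
  · rw [logb_div hx two_ne_zero, logb_self_eq_one one_lt_two]
    ring

lemma mul_logb_div_two_add_one_sub (x : ℝ) :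
    x * logb 2 (x / 2) + (1 - x) * logb 2 ((1 - x) / 2) = -H2 x - 1 := by
  rw [mul_logb_div_two, mul_logb_div_two, H2]
  ring

theorem cross_term_identity (p q : ℝ) (hp : p ∈ Set.Ioo (0:ℝ) 1) (hq : q ∈ Set.Ioo (0:ℝ) 1) :
    ((1 - p) / (1 - p * q)) * Real.logb 2 ((1 - p) / (2 * (1 - p * q))) +
      (p * (1 - q) / (1 - p * q)) * Real.logb 2 (p * (1 - q) / (2 * (1 - p * q))) =
    (H2 (p * q) - H2 p - p * H2 q - (1 - p * q)) / (1 - p * q) := by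
  have hpq : p * q ≠ 1 := (mul_lt_one_of_nonneg_of_lt_one_left hp.1.le hp.2 hq.2.le).ne
  have hr : 1 - p * q ≠ 0 := sub_ne_zero.mpr hpq.symm
  have hgroup := H2_add_mul_H2 hpq
  set x := (1 - p) / (1 - p * q) with hx
  have hcompl : p * (1 - q) / (1 - p * q) = 1 - x := by
    rw [hx]
    field_simp
    ring
  have halve (a : ℝ) : a / (2 * (1 - p * q)) = a / (1 - p * q) / 2 := by
    rw [div_div, mul_comm]
  calc _ = x * logb 2 (x / 2) + (1 - x) * logb 2 ((1 - x) / 2) := by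
        rw [halve, halve, hcompl]
    _ = -H2 x - 1 := mul_logb_div_two_add_one_sub x
    _ = _ := by
        rw [eq_div_iff hr]
        linear_combination hgroup
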